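/- arXiv:2503.02381 — 5 statements merged into one kernel-verified Lean document; each statement's English description precedes it below -/
import Mathlib

section
/- Let ψ : ℝ_{≥0} → ℝ be a smooth function with bounded support. Then the Mellin transform ψ̃(s) = ∫_0^∞ ψ(x) x^{s} dx/x, defined initially for Re(s) > 0, extends to a meromorphic function on ℂ with at most simple poles at 0, −1, −2, …, and the residue of ψ̃ at s = 0 equals ψ(0). -/
open Filter Set

section Aux

open MeasureTheory Complex Asymptotics Topology

/-- The `n`-th auxiliary continuation of the Mellin transform. -/
noncomputable def mellinAuxQ (ψ : ℝ → ℝ) (n : ℕ) (s : ℂ) : ℂ :=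
  (-1 : ℂ) ^ n * mellin (fun x : ℝ => ((iteratedDeriv n ψ x : ℝ) : ℂ)) (s + n) /
    ∏ j ∈ Finset.range n, (s + (j : ℂ))

/-- The glued meromorphic continuation. -/
noncomputable def mellinAuxM (ψ : ℝ → ℝ) (s : ℂ) : ℂ :=
  mellinAuxQ ψ ⌊1 - s.re⌋₊ s

variable {ψ : ℝ → ℝ}

lemma mellinAux_floor_lt (s : ℂ) : -((⌊1 - s.re⌋₊ : ℝ)) < s.re := by
  have := Nat.lt_floor_add_one (1 - s.re)
  linarith

lemma mellinAux_hcs (hsupp : Bornology.IsBounded (Function.support ψ)) :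
    HasCompactSupport ψ :=
  hsupp.isCompact_closure

lemma mellinAux_hcs_iter (hsupp : Bornology.IsBounded (Function.support ψ)) (n : ℕ) :
    HasCompactSupport (iteratedDeriv n ψ) := by
  induction n with
  | zero => simpa using mellinAux_hcs hsupp
  | succ n ih => rw [iteratedDeriv_succ]; exact ih.deriv

lemma mellinAux_cont (hψ : ContDiff ℝ (⊤ : ℕ∞) ψ) (n : ℕ) :
    Continuous (iteratedDeriv n ψ) :=
  hψ.continuous_iteratedDeriv n (by exact_mod_cast le_top)

lemma mellinAux_contC (hψ : ContDiff ℝ (⊤ : ℕ∞) ψ) (n : ℕ) :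
    Continuous (fun x : ℝ => ((iteratedDeriv n ψ x : ℝ) : ℂ)) :=
  Complex.continuous_ofReal.comp (mellinAux_cont hψ n)

lemma mellinAux_bigO_top {f : ℝ → ℂ} (hf : HasCompactSupport f) (a : ℝ) :
    f =O[atTop] fun x : ℝ => x ^ (-a) := by
  obtain ⟨R, hR⟩ := hf.isBounded.subset_closedBall 0
  have hev : f =ᶠ[atTop] (fun _ => (0 : ℂ)) := by
    filter_upwards [eventually_gt_atTop R] with x hx
    apply image_eq_zero_of_notMem_tsupport
    intro hmem
    have := hR hmem
    rw [Metric.mem_closedBall, Real.dist_eq, sub_zero] at this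
    have : x ≤ R := (abs_le.mp this).2
    linarith
  exact hev.trans_isBigO (isBigO_zero _ _)

lemma mellinAux_bigO_bot {f : ℝ → ℂ} (hf : HasCompactSupport f) (hc : Continuous f) :
    f =O[𝓝[>] (0 : ℝ)] fun x : ℝ => x ^ (-(0 : ℝ)) := by
  obtain ⟨C, hC⟩ := hf.exists_bound_of_continuous hc
  apply IsBigO.of_bound C
  filter_upwards [self_mem_nhdsWithin] with x _
  rw [neg_zero, Real.rpow_zero]
  simpa using hC x

lemma mellinAux_conv (hψ : ContDiff ℝ (⊤ : ℕ∞) ψ)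
    (hsupp : Bornology.IsBounded (Function.support ψ)) (n : ℕ) {s : ℂ} (hs : 0 < s.re) :
    MellinConvergent (fun x : ℝ => ((iteratedDeriv n ψ x : ℝ) : ℂ)) s := by
  have hcs := (mellinAux_hcs_iter hsupp n)
  have hcs' : HasCompactSupport (fun x : ℝ => ((iteratedDeriv n ψ x : ℝ) : ℂ)) :=
    hcs.comp_left (g := fun y : ℝ => (y : ℂ)) Complex.ofReal_zero
  exact mellinConvergent_of_isBigO_rpow
    ((mellinAux_contC hψ n).locallyIntegrable.locallyIntegrableOn _)
    (mellinAux_bigO_top hcs' (s.re + 1)) (lt_add_one _)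
    (mellinAux_bigO_bot hcs' (mellinAux_contC hψ n)) hs

lemma mellinAux_diff (hψ : ContDiff ℝ (⊤ : ℕ∞) ψ)
    (hsupp : Bornology.IsBounded (Function.support ψ)) (n : ℕ) {s : ℂ} (hs : 0 < s.re) :
    DifferentiableAt ℂ (mellin (fun x : ℝ => ((iteratedDeriv n ψ x : ℝ) : ℂ))) s := by
  have hcs := (mellinAux_hcs_iter hsupp n)
  have hcs' : HasCompactSupport (fun x : ℝ => ((iteratedDeriv n ψ x : ℝ) : ℂ)) :=
    hcs.comp_left (g := fun y : ℝ => (y : ℂ)) Complex.ofReal_zero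
  exact mellin_differentiableAt_of_isBigO_rpow
    ((mellinAux_contC hψ n).locallyIntegrable.locallyIntegrableOn _)
    (mellinAux_bigO_top hcs' (s.re + 1)) (lt_add_one _)
    (mellinAux_bigO_bot hcs' (mellinAux_contC hψ n)) hs

/-- Integration by parts for the Mellin transform. -/
lemma mellinAux_ibp (hψ : ContDiff ℝ (⊤ : ℕ∞) ψ)
    (hsupp : Bornology.IsBounded (Function.support ψ)) (n : ℕ) {s : ℂ} (hs : 0 < s.re) :
    mellin (fun x : ℝ => ((iteratedDeriv (n + 1) ψ x : ℝ) : ℂ)) (s + 1)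
      = -s * mellin (fun x : ℝ => ((iteratedDeriv n ψ x : ℝ) : ℂ)) s := by
  set g := iteratedDeriv n ψ with hg
  set F : ℝ → ℂ := fun x => (g x : ℂ) * (x : ℂ) ^ s with hF
  set F' : ℝ → ℂ := fun x =>
    (x : ℂ) ^ s * ((iteratedDeriv (n + 1) ψ x : ℝ) : ℂ) + s * ((x : ℂ) ^ (s - 1) * (g x : ℂ))
    with hF'
  have hs0 : s ≠ 0 := by
    intro h; rw [h] at hs; simp at hs
  have hderiv : ∀ x ∈ Ioi (0 : ℝ), HasDerivAt F (F' x) x := by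
    intro x hx
    have hx0 : (0 : ℝ) < x := hx
    have h1 : HasDerivAt (fun y : ℝ => (g y : ℂ)) ((iteratedDeriv (n + 1) ψ x : ℝ) : ℂ) x := by
      have hd : HasDerivAt g (deriv g x) x :=
        ((hψ.differentiable_iteratedDeriv n (by exact_mod_cast lt_top_iff_ne_top.2 (by simp))) x).hasDerivAt
      have : deriv g x = iteratedDeriv (n + 1) ψ x := by
        rw [iteratedDeriv_succ]
      exact (this ▸ hd).ofReal_comp
    have h2 : HasDerivAt (fun y : ℝ => ((y : ℂ)) ^ s) (s * (x : ℂ) ^ (s - 1)) x := by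
      have hsp : ((x : ℝ) : ℂ) ∈ Complex.slitPlane := Complex.ofReal_mem_slitPlane.2 hx0
      exact ((Complex.hasStrictDerivAt_cpow_const hsp).hasDerivAt).comp_ofReal
    have := h1.fun_mul h2
    refine this.congr_deriv ?_
    simp only [hF']
    ring
  have hcont : Continuous F :=
    (mellinAux_contC hψ n).mul (Complex.continuous_ofReal_cpow_const hs)
  have hint1 : IntegrableOn (fun x : ℝ =>
      (x : ℂ) ^ s * ((iteratedDeriv (n + 1) ψ x : ℝ) : ℂ)) (Ioi (0 : ℝ)) := by
    have := mellinAux_conv hψ hsupp (n + 1) (s := s + 1) (by simp; linarith)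
    simpa [MellinConvergent, smul_eq_mul, add_sub_cancel_right] using this
  have hint2 : IntegrableOn (fun x : ℝ =>
      (x : ℂ) ^ (s - 1) * (g x : ℂ)) (Ioi (0 : ℝ)) := by
    have := mellinAux_conv hψ hsupp n (s := s) hs
    simpa [MellinConvergent, smul_eq_mul] using this
  have hint : IntegrableOn F' (Ioi (0 : ℝ)) := by
    exact hint1.add (hint2.const_mul s)
  have htop : Tendsto F atTop (𝓝 (0 : ℂ)) := by
    obtain ⟨R, hR⟩ := (mellinAux_hcs_iter hsupp n).isBounded.subset_closedBall 0
    have hev : F =ᶠ[atTop] (fun _ => (0 : ℂ)) := by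
      filter_upwards [eventually_gt_atTop R] with x hx
      have hgx : g x = 0 := by
        apply image_eq_zero_of_notMem_tsupport
        intro hmem
        have := hR hmem
        rw [Metric.mem_closedBall, Real.dist_eq, sub_zero] at this
        have : x ≤ R := (abs_le.mp this).2
        linarith
      simp [hF, hgx]
    exact Tendsto.congr' hev.symm tendsto_const_nhds
  have key := integral_Ioi_of_hasDerivAt_of_tendsto
    hcont.continuousWithinAt hderiv hint htop
  have hF0 : F 0 = 0 := by
    simp [hF, Complex.zero_cpow hs0]
  rw [hF0, sub_zero] at key
  have hsplit : ∫ x in Ioi (0 : ℝ), F' x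
      = (∫ x in Ioi (0 : ℝ), (x : ℂ) ^ s * ((iteratedDeriv (n + 1) ψ x : ℝ) : ℂ))
        + ∫ x in Ioi (0 : ℝ), s * ((x : ℂ) ^ (s - 1) * (g x : ℂ)) := by
    exact integral_add hint1 (hint2.const_mul s)
  rw [hsplit] at key
  have e1 : mellin (fun x : ℝ => ((iteratedDeriv (n + 1) ψ x : ℝ) : ℂ)) (s + 1)
      = ∫ x in Ioi (0 : ℝ), (x : ℂ) ^ s * ((iteratedDeriv (n + 1) ψ x : ℝ) : ℂ) := by
    simp [mellin, smul_eq_mul, add_sub_cancel_right]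
  have e2 : mellin (fun x : ℝ => ((iteratedDeriv n ψ x : ℝ) : ℂ)) s
      = ∫ x in Ioi (0 : ℝ), (x : ℂ) ^ (s - 1) * (g x : ℂ) := by
    simp [mellin, smul_eq_mul, hg]
  rw [integral_const_mul] at key
  rw [e1, e2]
  linear_combination key

lemma mellinAuxQ_succ (hψ : ContDiff ℝ (⊤ : ℕ∞) ψ)
    (hsupp : Bornology.IsBounded (Function.support ψ)) (n : ℕ) {s : ℂ}
    (hs : -(n : ℝ) < s.re) :
    mellinAuxQ ψ (n + 1) s = mellinAuxQ ψ n s := by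
  have hre : 0 < (s + (n : ℂ)).re := by
    simp only [Complex.add_re, Complex.natCast_re]
    linarith
  have hibp := mellinAux_ibp hψ hsupp n hre
  have hsn : s + (n : ℂ) ≠ 0 := by
    intro h
    have : (s + (n : ℂ)).re = 0 := by rw [h]; simp
    rw [this] at hre; exact lt_irrefl _ hre
  unfold mellinAuxQ
  rw [Finset.prod_range_succ]
  have harg : s + ((n : ℕ) + 1 : ℕ) = (s + n) + 1 := by push_cast; ring
  rw [harg, hibp]
  by_cases hP : (∏ j ∈ Finset.range n, (s + (j : ℂ))) = 0
  · rw [hP]; simp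
  · field_simp
    ring

lemma mellinAuxQ_mono (hψ : ContDiff ℝ (⊤ : ℕ∞) ψ)
    (hsupp : Bornology.IsBounded (Function.support ψ)) {n m : ℕ} (h : n ≤ m) {s : ℂ}
    (hs : -(n : ℝ) < s.re) :
    mellinAuxQ ψ n s = mellinAuxQ ψ m s := by
  induction m, h using Nat.le_induction with
  | base => rfl
  | succ m hm ih =>
    rw [ih, mellinAuxQ_succ hψ hsupp m]
    have : -(m : ℝ) ≤ -(n : ℝ) := by
      simp only [neg_le_neg_iff]; exact_mod_cast hm
    linarith

lemma mellinAuxM_eq (hψ : ContDiff ℝ (⊤ : ℕ∞) ψ)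
    (hsupp : Bornology.IsBounded (Function.support ψ)) (n : ℕ) {s : ℂ}
    (hs : -(n : ℝ) < s.re) :
    mellinAuxM ψ s = mellinAuxQ ψ n s := by
  set n0 := ⌊1 - s.re⌋₊ with hn0
  have h0 : -(n0 : ℝ) < s.re := mellinAux_floor_lt s
  have e1 : mellinAuxQ ψ n0 s = mellinAuxQ ψ (max n n0) s :=
    mellinAuxQ_mono hψ hsupp (le_max_right _ _) h0
  have e2 : mellinAuxQ ψ n s = mellinAuxQ ψ (max n n0) s :=
    mellinAuxQ_mono hψ hsupp (le_max_left _ _) hs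
  rw [mellinAuxM, ← hn0, e1, e2]


lemma mellinAux_residue (hψ : ContDiff ℝ (⊤ : ℕ∞) ψ)
    (hsupp : Bornology.IsBounded (Function.support ψ)) (k : ℕ) :
    Tendsto (fun s : ℂ => (s + (k : ℂ)) * mellinAuxM ψ s)
      (nhdsWithin (-(k : ℂ)) {-(k : ℂ)}ᶜ)
      (nhds ((-1 : ℂ) ^ (k + 1) *
        mellin (fun x : ℝ => ((iteratedDeriv (k + 1) ψ x : ℝ) : ℂ)) 1 /
        ∏ j ∈ Finset.range k, (-(k : ℂ) + (j : ℂ)))) := by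
  set n := k + 1 with hn
  set g : ℂ → ℂ := fun z =>
    (-1 : ℂ) ^ n * mellin (fun x : ℝ => ((iteratedDeriv n ψ x : ℝ) : ℂ)) (z + n) /
      ∏ j ∈ Finset.range k, (z + (j : ℂ)) with hgdef
  have harg : -(k : ℂ) + (n : ℂ) = 1 := by rw [hn]; push_cast; ring
  have hg0 : g (-(k : ℂ)) = (-1 : ℂ) ^ (k + 1) *
      mellin (fun x : ℝ => ((iteratedDeriv (k + 1) ψ x : ℝ) : ℂ)) 1 /
      ∏ j ∈ Finset.range k, (-(k : ℂ) + (j : ℂ)) := by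
    rw [hgdef]; simp only [harg]; rfl
  have hre1 : 0 < ((-(k : ℂ) + (n : ℂ))).re := by rw [harg]; simp
  have hPne : (∏ j ∈ Finset.range k, (-(k : ℂ) + (j : ℂ))) ≠ 0 := by
    rw [Finset.prod_ne_zero_iff]
    intro j hj h
    have hre : (-(k : ℂ) + (j : ℂ)).re = 0 := by rw [h]; simp
    simp only [Complex.add_re, Complex.neg_re, Complex.natCast_re] at hre
    have hjk : (j : ℝ) = (k : ℝ) := by linarith
    have h1 : j = k := by exact_mod_cast hjk
    have h2 := Finset.mem_range.mp hj
    omega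
  have hcontg : ContinuousAt g (-(k : ℂ)) := by
    apply ContinuousAt.div
    · have h1 : DifferentiableAt ℂ
          (fun z : ℂ => mellin (fun x : ℝ => ((iteratedDeriv n ψ x : ℝ) : ℂ)) (z + (n : ℂ)))
          (-(k : ℂ)) :=
        (mellinAux_diff hψ hsupp n hre1).comp (-(k : ℂ)) (f := fun z : ℂ => z + (n : ℂ)) (differentiableAt_id.add_const _)
      exact continuousAt_const.mul h1.continuousAt
    · exact (continuous_finset_prod _ fun j _ =>
        continuous_id.add continuous_const).continuousAt
    · exact hPne
  have hU : {z : ℂ | -(n : ℝ) < z.re} ∈ 𝓝 (-(k : ℂ)) := by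
    apply (isOpen_lt continuous_const Complex.continuous_re).mem_nhds
    simp only [mem_setOf_eq, Complex.neg_re, Complex.natCast_re, hn]
    push_cast; linarith
  have heq : ∀ᶠ z in nhdsWithin (-(k : ℂ)) {-(k : ℂ)}ᶜ,
      g z = (z + (k : ℂ)) * mellinAuxM ψ z := by
    filter_upwards [nhdsWithin_le_nhds hU, self_mem_nhdsWithin] with z hz hz'
    rw [mellinAuxM_eq hψ hsupp n hz]
    have hzk : z + (k : ℂ) ≠ 0 := by
      intro h
      exact hz' (mem_singleton_iff.mpr (by linear_combination h))
    rw [mellinAuxQ, show Finset.range n = Finset.range (k + 1) from by rw [hn],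
      Finset.prod_range_succ]
    by_cases hP : (∏ j ∈ Finset.range k, (z + (j : ℂ))) = 0
    · rw [hP]; simp [hgdef, hP]
    · rw [hgdef]
      field_simp
  have := (hcontg.tendsto.mono_left nhdsWithin_le_nhds).congr' heq
  rwa [hg0] at this

end Aux

open MeasureTheory Complex Asymptotics Topology

/-- Let `ψ : ℝ_{≥0} → ℝ` be a smooth function with bounded support.  Then the Mellin
transform `ψ̃(s) = ∫_0^∞ ψ(x) x^s dx/x`, defined for `Re s > 0`, extends to a meromorphic
function on `ℂ` with at most simple poles at `0, -1, -2, …`, and `Res_{s=0} ψ̃ = ψ(0)`. -/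
theorem mellin_of_smooth_meromorphic_continuation
    (ψ : ℝ → ℝ) (hψ : ContDiff ℝ (⊤ : ℕ∞) ψ) (hsupp : Bornology.IsBounded (Function.support ψ)) :
    ∃ M : ℂ → ℂ,
      (∀ s : ℂ, (∀ k : ℕ, s ≠ -(k : ℂ)) → DifferentiableAt ℂ M s) ∧
      (∀ s : ℂ, 0 < s.re →
        M s = ∫ x in Ioi (0 : ℝ), (ψ x : ℂ) * (x : ℂ) ^ (s - 1)) ∧
      (∀ k : ℕ, ∃ c : ℂ,
        Tendsto (fun s : ℂ => (s + (k : ℂ)) * M s) (nhdsWithin (-(k : ℂ)) {-(k : ℂ)}ᶜ)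
          (nhds c)) ∧
      Tendsto (fun s : ℂ => s * M s) (nhdsWithin 0 {(0 : ℂ)}ᶜ) (nhds (ψ 0 : ℂ)) := by
  refine ⟨mellinAuxM ψ, ?_, ?_, ?_, ?_⟩
  · -- differentiability away from the poles
    intro s hsne
    set n := ⌊1 - s.re⌋₊ + 1 with hn
    have hlt : -((n : ℝ) - 1) < s.re := by
      have := mellinAux_floor_lt s
      push_cast [hn]; push_cast at this ⊢; linarith
    have hlt' : -(n : ℝ) < s.re := by linarith
    have hre : 0 < (s + (n : ℂ)).re := by
      simp only [Complex.add_re, Complex.natCast_re]; linarith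
    have hdiffQ : DifferentiableAt ℂ (mellinAuxQ ψ n) s := by
      apply DifferentiableAt.div
      · apply DifferentiableAt.const_mul
        exact (mellinAux_diff hψ hsupp n hre).comp s (f := fun z : ℂ => z + (n : ℂ))
          ((differentiableAt_id.add_const _))
      · exact DifferentiableAt.fun_finsetProd fun j _ =>
          (differentiableAt_fun_id.add_const _)
      · rw [Finset.prod_ne_zero_iff]
        intro j _
        intro h
        exact hsne j (by linear_combination h)
    have hU : {z : ℂ | -(n : ℝ) < z.re} ∈ 𝓝 s :=
      (isOpen_lt continuous_const Complex.continuous_re).mem_nhds hlt'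
    apply hdiffQ.congr_of_eventuallyEq
    filter_upwards [hU] with z hz
    exact mellinAuxM_eq hψ hsupp n hz
  · -- value for Re s > 0
    intro s hs
    have h0 : -((0 : ℕ) : ℝ) < s.re := by simpa using hs
    rw [mellinAuxM_eq hψ hsupp 0 h0]
    unfold mellinAuxQ
    simp only [pow_zero, one_mul, Finset.range_zero, Finset.prod_empty, div_one,
      Nat.cast_zero, add_zero, iteratedDeriv_zero]
    rw [mellin]
    exact setIntegral_congr_fun measurableSet_Ioi fun x _ => by
      rw [smul_eq_mul, mul_comm]
  · -- simple poles
    intro k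
    exact ⟨_, mellinAux_residue hψ hsupp k⟩
  · -- residue at 0
    have h0 := mellinAux_residue hψ hsupp 0
    have hc : (-1 : ℂ) ^ (0 + 1) * mellin (fun x : ℝ => ((iteratedDeriv (0 + 1) ψ x : ℝ) : ℂ)) 1 /
        ∏ j ∈ Finset.range 0, (-((0 : ℕ) : ℂ) + (j : ℂ)) = (ψ 0 : ℂ) := by
      simp only [Finset.range_zero, Finset.prod_empty, div_one, pow_one, zero_add,
        iteratedDeriv_one, neg_one_mul, neg_eq_iff_eq_neg]
      have e1 : mellin (fun x : ℝ => ((deriv ψ x : ℝ) : ℂ)) 1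
          = ∫ x in Ioi (0 : ℝ), ((deriv ψ x : ℝ) : ℂ) := by
        rw [mellin]
        refine setIntegral_congr_fun measurableSet_Ioi fun x _ => ?_
        simp
      rw [e1]
      have hreal : ∫ x in Ioi (0 : ℝ), deriv ψ x = -ψ 0 :=
        (mellinAux_hcs hsupp).integral_Ioi_deriv_eq (hψ.of_le (by simp)) 0
      have hcontd : Continuous (deriv ψ) := by
        have := mellinAux_cont hψ 1; rwa [iteratedDeriv_one] at this
      have hcsd : HasCompactSupport (deriv ψ) := (mellinAux_hcs hsupp).deriv
      have hint : Integrable (deriv ψ) (volume.restrict (Ioi (0 : ℝ))) :=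
        (hcontd.integrable_of_hasCompactSupport hcsd).restrict
      have hcomm := Complex.ofRealCLM.integral_comp_comm hint
      simp only [Complex.ofRealCLM_apply] at hcomm
      rw [hcomm, hreal]
      push_cast
      ring
    rw [hc] at h0
    have hfun : (fun s : ℂ => (s + ((0 : ℕ) : ℂ)) * mellinAuxM ψ s)
        = fun s : ℂ => s * mellinAuxM ψ s := by
      funext s; simp
    rw [hfun] at h0
    simpa using h0
end

section
/- Let p be an odd prime and let f(a,b) = ab(a+b) be the binary cubic form over ℤ_p corresponding to the split cubic algebra ℤ_p^3. For m ≥ 1, the measure of primitive pairs (a,b) ∈ ℤ_p^2 (i.e. with min(v_p(a),v_p(b))=0) such that |f(a,b)|_p = p^{-m}, with respect to the Haar measure assigning ℤ_p^2 measure 1, equals 3(p−1)^2 p^{−m−2}, and the measure of primitive pairs with |f(a,b)|_p = 1 equals (p−2)(p−1)/p^2. -/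
open Finset

lemma zmod_cast_dvd_iff {n d : ℕ} [NeZero n] (hd : d ∣ n) (x : ZMod n) :
    (d : ZMod n) ∣ x ↔ d ∣ x.val := by
  constructor
  · rintro ⟨y, hy⟩
    have h1 : (x.val : ZMod n) = ((d * y.val : ℕ) : ZMod n) := by
      push_cast
      simp [ZMod.natCast_val, ZMod.cast_id, hy]
    rw [ZMod.natCast_eq_natCast_iff] at h1
    have h2 : (n : ℤ) ∣ (d * y.val : ℕ) - (x.val : ℕ) := h1.dvd
    have h3 : (d : ℤ) ∣ ((d * y.val : ℕ) : ℤ) - (x.val : ℕ) :=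
      dvd_trans (Int.natCast_dvd_natCast.mpr hd) h2
    have h4 : (d : ℤ) ∣ (x.val : ℤ) := by
      have h5 : (d : ℤ) ∣ ((d * y.val : ℕ) : ℤ) := by push_cast; exact Dvd.intro _ rfl
      simpa using dvd_sub h5 h3
    exact_mod_cast h4
  · rintro ⟨k, hk⟩
    refine ⟨(k : ZMod n), ?_⟩
    have : x = ((x.val : ℕ) : ZMod n) := by simp [ZMod.natCast_val, ZMod.cast_id]
    rw [this, hk]
    push_cast
    ring

lemma zmod_isUnit_iff {p : ℕ} (hp : p.Prime) {k : ℕ} (hk : 0 < k) (x : ZMod (p ^ k)) :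
    IsUnit x ↔ ¬ (p : ZMod (p ^ k)) ∣ x := by
  haveI : NeZero (p ^ k) := ⟨pow_ne_zero _ hp.ne_zero⟩
  have h1 : IsUnit x ↔ x.val.Coprime (p ^ k) := by
    conv_lhs => rw [← ZMod.natCast_rightInverse x]
    exact ZMod.isUnit_iff_coprime _ _
  rw [h1, Nat.coprime_pow_right_iff hk, Nat.coprime_comm,
    Nat.Prime.coprime_iff_not_dvd hp, zmod_cast_dvd_iff (dvd_pow_self p hk.ne') x]

lemma card_filter_isUnit_eq_totient (n : ℕ) [NeZero n] :
    (univ.filter (fun x : ZMod n => IsUnit x)).card = n.totient := by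
  classical
  rw [← Fintype.card_subtype, ← ZMod.card_units_eq_totient n]
  exact Fintype.card_congr ⟨fun x => x.2.unit, fun u => ⟨u, u.isUnit⟩,
    fun x => Subtype.ext x.2.unit_spec, fun u => Units.ext u.isUnit.unit_spec⟩

lemma key_split {p m : ℕ} (hp : p.Prime) (hm : 1 ≤ m) (a b : ZMod (p ^ (m + 1))) :
    ((IsUnit a ∨ IsUnit b) ∧ (p : ZMod (p ^ (m + 1))) ^ m ∣ a * b * (a + b) ∧
        a * b * (a + b) ≠ 0) ↔
      ((IsUnit a ∧ (p : ZMod (p ^ (m + 1))) ^ m ∣ b ∧ b ≠ 0) ∨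
       (IsUnit b ∧ (p : ZMod (p ^ (m + 1))) ^ m ∣ a ∧ a ≠ 0) ∨
       (IsUnit a ∧ IsUnit b ∧ (p : ZMod (p ^ (m + 1))) ^ m ∣ (a + b) ∧ a + b ≠ 0)) := by
  have hk : 0 < m + 1 := Nat.succ_pos m
  have hq : (p : ZMod (p ^ (m + 1))) ∣ (p : ZMod (p ^ (m + 1))) ^ m :=
    dvd_pow_self _ (by omega)
  have hU : ∀ x : ZMod (p ^ (m + 1)), IsUnit x ↔ ¬ (p : ZMod (p ^ (m + 1))) ∣ x :=
    fun x => zmod_isUnit_iff hp hk x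
  constructor
  · rintro ⟨hor, hdvd, hne⟩
    by_cases ua : IsUnit a <;> by_cases ub : IsUnit b
    · refine Or.inr (Or.inr ⟨ua, ub, ?_, fun h => hne (by rw [h, mul_zero])⟩)
      exact ((ua.mul ub).dvd_mul_left).mp hdvd
    · -- a unit, b not unit
      have hpb : (p : ZMod (p ^ (m + 1))) ∣ b := by have := (hU b).not.mp ub; simpa using this
      have hab : IsUnit (a + b) := by
        rw [hU]
        intro h
        exact ((hU a).mp ua) (by simpa using dvd_sub h hpb)
      refine Or.inl ⟨ua, ?_, fun h => hne (by rw [h]; ring)⟩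
      have h1 : a * b * (a + b) = a * (a + b) * b := by ring
      rw [h1] at hdvd
      exact ((ua.mul hab).dvd_mul_left).mp hdvd
    · -- b unit, a not unit
      have hpa : (p : ZMod (p ^ (m + 1))) ∣ a := by have := (hU a).not.mp ua; simpa using this
      have hab : IsUnit (a + b) := by
        rw [hU]
        intro h
        exact ((hU b).mp ub) (by simpa using dvd_sub h hpa)
      refine Or.inr (Or.inl ⟨ub, ?_, fun h => hne (by rw [h]; ring)⟩)
      have h1 : a * b * (a + b) = b * (a + b) * a := by ring
      rw [h1] at hdvd
      exact ((ub.mul hab).dvd_mul_left).mp hdvd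
    · exact absurd hor (by simp [ua, ub])
  · have haux : ∀ x y : ZMod (p ^ (m + 1)), IsUnit x →
        (p : ZMod (p ^ (m + 1))) ^ m ∣ y → y ≠ 0 →
        (IsUnit x ∨ IsUnit y) ∧ (p : ZMod (p ^ (m + 1))) ^ m ∣ x * y * (x + y) ∧
          x * y * (x + y) ≠ 0 := by
      intro x y ux hdy hy0
      have hpy : (p : ZMod (p ^ (m + 1))) ∣ y := dvd_trans hq hdy
      have hxy : IsUnit (x + y) := by
        rw [hU]
        intro h
        exact ((hU x).mp ux) (by simpa using dvd_sub h hpy)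
      have h1 : x * y * (x + y) = x * (x + y) * y := by ring
      refine ⟨Or.inl ux, ?_, ?_⟩
      · rw [h1]; exact Dvd.dvd.mul_left hdy _
      · rw [h1]
        exact fun h => hy0 (((ux.mul hxy).mul_right_eq_zero).mp h)
    rintro (⟨ua, hdb, hb0⟩ | ⟨ub, hda, ha0⟩ | ⟨ua, ub, hdab, hab0⟩)
    · exact haux a b ua hdb hb0
    · have := haux b a ub hda ha0
      refine ⟨this.1.symm, ?_, ?_⟩
      · have h1 : a * b * (a + b) = b * a * (b + a) := by ring
        rw [h1]; exact this.2.1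
      · have h1 : a * b * (a + b) = b * a * (b + a) := by ring
        rw [h1]; exact this.2.2
    · refine ⟨Or.inl ua, ((ua.mul ub).dvd_mul_left).mpr hdab, ?_⟩
      exact fun h => hab0 (((ua.mul ub).mul_right_eq_zero).mp h)

lemma main_count {p m : ℕ} (hp : p.Prime) (hm : 1 ≤ m) :
    Nat.card {ab : ZMod (p ^ (m + 1)) × ZMod (p ^ (m + 1)) //
        (IsUnit ab.1 ∨ IsUnit ab.2) ∧
        (p : ZMod (p ^ (m + 1))) ^ m ∣ ab.1 * ab.2 * (ab.1 + ab.2) ∧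
        ab.1 * ab.2 * (ab.1 + ab.2) ≠ 0} = 3 * (p ^ m * (p - 1) * (p - 1)) := by
  classical
  haveI : NeZero (p ^ (m + 1)) := ⟨pow_ne_zero _ hp.ne_zero⟩
  haveI : NeZero p := ⟨hp.ne_zero⟩
  have hk : 0 < m + 1 := Nat.succ_pos m
  have hppow : ((p ^ m : ℕ) : ZMod (p ^ (m + 1))) = (p : ZMod (p ^ (m + 1))) ^ m := by
    push_cast; ring
  have hdvdN : p ^ m ∣ p ^ (m + 1) := pow_dvd_pow p (by omega)
  have hq : (p : ZMod (p ^ (m + 1))) ∣ (p : ZMod (p ^ (m + 1))) ^ m :=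
    dvd_pow_self _ (by omega)
  have hU : ∀ x : ZMod (p ^ (m + 1)), IsUnit x ↔ ¬ (p : ZMod (p ^ (m + 1))) ∣ x :=
    fun x => zmod_isUnit_iff hp hk x
  set N := p ^ (m + 1) with hN
  -- the up and down maps
  set up : ZMod p → ZMod N := fun c => ((p ^ m * c.val : ℕ) : ZMod N) with hup
  set down : ZMod N → ZMod p := fun b => ((b.val / p ^ m : ℕ) : ZMod p) with hdown
  have up_val : ∀ c : ZMod p, (up c).val = p ^ m * c.val := by
    intro c
    apply ZMod.val_natCast_of_lt
    have : c.val < p := ZMod.val_lt c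
    have hpm : 0 < p ^ m := pow_pos hp.pos m
    calc p ^ m * c.val < p ^ m * p := by exact Nat.mul_lt_mul_of_pos_left this hpm
      _ = p ^ (m + 1) := by ring
  have up_dvd : ∀ c : ZMod p, (p : ZMod N) ^ m ∣ up c := by
    intro c
    refine ⟨(c.val : ZMod N), ?_⟩
    rw [hup]; push_cast; ring
  have up_ne : ∀ c : ZMod p, c ≠ 0 → up c ≠ 0 := by
    intro c hc h0
    have h1 : (up c).val = 0 := by rw [h0, ZMod.val_zero]
    rw [up_val c] at h1
    have : c.val = 0 := by
      have := pow_ne_zero m hp.ne_zero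
      exact Nat.mul_eq_zero.mp h1 |>.resolve_left this
    exact hc (by rwa [← ZMod.val_eq_zero])
  have down_up : ∀ c : ZMod p, down (up c) = c := by
    intro c
    rw [hdown]
    simp only [up_val c]
    rw [Nat.mul_div_cancel_left _ (pow_pos hp.pos m)]
    simp [ZMod.natCast_val, ZMod.cast_id]
  have up_down : ∀ b : ZMod N, (p : ZMod N) ^ m ∣ b → up (down b) = b := by
    intro b hb
    rw [← hppow] at hb
    have hvb : p ^ m ∣ b.val := (zmod_cast_dvd_iff hdvdN b).mp hb
    have hltp : b.val / p ^ m < p := by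
      have h1 : b.val < p ^ (m + 1) := ZMod.val_lt b
      have h2 : p ^ (m + 1) = p ^ m * p := by ring
      exact Nat.div_lt_of_lt_mul (by omega)
    rw [hup, hdown]
    simp only [ZMod.val_natCast_of_lt hltp]
    rw [Nat.mul_div_cancel' hvb]
    simp [ZMod.natCast_val, ZMod.cast_id]
  have down_ne : ∀ b : ZMod N, (p : ZMod N) ^ m ∣ b → b ≠ 0 → down b ≠ 0 := by
    intro b hb hb0 h0
    apply hb0
    rw [← up_down b hb, h0]
    simp [hup]
  -- counting
  rw [Nat.card_eq_fintype_card, Fintype.card_subtype]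
  have hfiltercongr :
      (univ.filter (fun ab : ZMod N × ZMod N =>
        (IsUnit ab.1 ∨ IsUnit ab.2) ∧
        (p : ZMod N) ^ m ∣ ab.1 * ab.2 * (ab.1 + ab.2) ∧
        ab.1 * ab.2 * (ab.1 + ab.2) ≠ 0)) =
      (univ.filter (fun ab : ZMod N × ZMod N =>
        (IsUnit ab.1 ∧ (p : ZMod N) ^ m ∣ ab.2 ∧ ab.2 ≠ 0) ∨
        (IsUnit ab.2 ∧ (p : ZMod N) ^ m ∣ ab.1 ∧ ab.1 ≠ 0) ∨
        (IsUnit ab.1 ∧ IsUnit ab.2 ∧ (p : ZMod N) ^ m ∣ (ab.1 + ab.2) ∧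
          ab.1 + ab.2 ≠ 0))) := by
    apply Finset.filter_congr
    intro ab _
    simpa using key_split hp hm ab.1 ab.2
  rw [hfiltercongr]
  -- disjointness facts
  have nonunit_of : ∀ x : ZMod N, (p : ZMod N) ^ m ∣ x → ¬ IsUnit x := by
    intro x hx hux
    exact ((hU x).mp hux) (dvd_trans hq hx)
  rw [Finset.filter_or, Finset.filter_or]
  rw [Finset.card_union_of_disjoint, Finset.card_union_of_disjoint]
  · -- now three cards
    have htarget : (univ.filter (fun x : ZMod N × ZMod p => IsUnit x.1 ∧ x.2 ≠ 0)).card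
        = p ^ m * (p - 1) * (p - 1) := by
      have hsplit : (univ.filter (fun x : ZMod N × ZMod p => IsUnit x.1 ∧ x.2 ≠ 0))
          = (univ.filter (fun a : ZMod N => IsUnit a)) ×ˢ
            (univ.filter (fun c : ZMod p => c ≠ 0)) := by
        ext x
        simp [Finset.mem_product]
      rw [hsplit, Finset.card_product]
      rw [card_filter_isUnit_eq_totient N, Finset.filter_ne' univ (0 : ZMod p),
        Finset.card_erase_of_mem (Finset.mem_univ _)]
      rw [Finset.card_univ, ZMod.card p, hN, Nat.totient_prime_pow hp hk]
      simp
    have hcard1 : (univ.filter (fun ab : ZMod N × ZMod N =>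
        IsUnit ab.1 ∧ (p : ZMod N) ^ m ∣ ab.2 ∧ ab.2 ≠ 0)).card
        = p ^ m * (p - 1) * (p - 1) := by
      rw [← htarget]
      refine Finset.card_bij' (fun ab _ => (ab.1, down ab.2)) (fun x _ => (x.1, up x.2))
        ?_ ?_ ?_ ?_
      · intro ab hab
        simp only [Finset.mem_filter, Finset.mem_univ, true_and] at hab ⊢
        exact ⟨hab.1, down_ne ab.2 hab.2.1 hab.2.2⟩
      · intro x hx
        simp only [Finset.mem_filter, Finset.mem_univ, true_and] at hx ⊢
        exact ⟨hx.1, up_dvd x.2, up_ne x.2 hx.2⟩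
      · intro ab hab
        simp only [Finset.mem_filter, Finset.mem_univ, true_and] at hab
        have h2 : up (down ab.2) = ab.2 := up_down ab.2 hab.2.1
        simp [h2]
      · intro x hx
        have h2 : down (up x.2) = x.2 := down_up x.2
        simp [h2]
    have hcard2 : (univ.filter (fun ab : ZMod N × ZMod N =>
        IsUnit ab.2 ∧ (p : ZMod N) ^ m ∣ ab.1 ∧ ab.1 ≠ 0)).card
        = p ^ m * (p - 1) * (p - 1) := by
      rw [← hcard1]
      refine Finset.card_bij' (fun ab _ => (ab.2, ab.1)) (fun ab _ => (ab.2, ab.1))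
        ?_ ?_ ?_ ?_
      · intro ab hab
        simpa using hab
      · intro ab hab
        simpa using hab
      · intro ab _; rfl
      · intro ab _; rfl
    have hcard3 : (univ.filter (fun ab : ZMod N × ZMod N =>
        IsUnit ab.1 ∧ IsUnit ab.2 ∧ (p : ZMod N) ^ m ∣ (ab.1 + ab.2) ∧
          ab.1 + ab.2 ≠ 0)).card = p ^ m * (p - 1) * (p - 1) := by
      rw [← htarget]
      refine Finset.card_bij' (fun ab _ => (ab.1, down (ab.1 + ab.2)))
        (fun x _ => (x.1, up x.2 - x.1)) ?_ ?_ ?_ ?_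
      · intro ab hab
        simp only [Finset.mem_filter, Finset.mem_univ, true_and] at hab ⊢
        exact ⟨hab.1, down_ne _ hab.2.2.1 hab.2.2.2⟩
      · intro x hx
        simp only [Finset.mem_filter, Finset.mem_univ, true_and] at hx ⊢
        have h1 : x.1 + (up x.2 - x.1) = up x.2 := by ring
        refine ⟨hx.1, ?_, ?_, ?_⟩
        · rw [hU]
          intro hd
          apply (hU x.1).mp hx.1
          have hpu : (p : ZMod N) ∣ up x.2 := dvd_trans hq (up_dvd x.2)
          have : x.1 = up x.2 - (up x.2 - x.1) := by ring
          rw [this]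
          exact dvd_sub hpu hd
        · rw [h1]; exact up_dvd x.2
        · rw [h1]; exact up_ne x.2 hx.2
      · intro ab hab
        simp only [Finset.mem_filter, Finset.mem_univ, true_and] at hab
        have h2 : up (down (ab.1 + ab.2)) = ab.1 + ab.2 := up_down _ hab.2.2.1
        simp [h2]
      · intro x hx
        simp [down_up x.2]
    rw [hcard1, hcard2, hcard3]
    ring
  · -- disjoint 2 vs 3
    rw [Finset.disjoint_left]
    intro ab h2 h3
    simp only [Finset.mem_filter, Finset.mem_univ, true_and] at h2 h3
    exact nonunit_of ab.1 h2.2.1 h3.1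
  · -- disjoint 1 vs (2 ∪ 3)
    rw [Finset.disjoint_left]
    intro ab h1 h23
    simp only [Finset.mem_filter, Finset.mem_univ, true_and, Finset.mem_union] at h1 h23
    rcases h23 with h2 | h3
    · exact nonunit_of ab.2 h1.2.1 h2.1
    · exact nonunit_of ab.2 h1.2.1 h3.2.1


lemma count2 {p : ℕ} (hp : p.Prime) :
    Nat.card {ab : ZMod p × ZMod p //
        (IsUnit ab.1 ∨ IsUnit ab.2) ∧ IsUnit (ab.1 * ab.2 * (ab.1 + ab.2))} =
      (p - 1) * (p - 2) := by
  classical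
  haveI : Fact p.Prime := ⟨hp⟩
  rw [Nat.card_eq_fintype_card, Fintype.card_subtype]
  have hcongr : (univ.filter (fun ab : ZMod p × ZMod p =>
      (IsUnit ab.1 ∨ IsUnit ab.2) ∧ IsUnit (ab.1 * ab.2 * (ab.1 + ab.2)))) =
      (univ.filter (fun ab : ZMod p × ZMod p =>
        ab.1 ≠ 0 ∧ ab.2 ≠ 0 ∧ ab.1 + ab.2 ≠ 0)) := by
    apply Finset.filter_congr
    intro ab _
    simp only [isUnit_iff_ne_zero, mul_ne_zero_iff]
    constructor
    · rintro ⟨-, ⟨h1, h2⟩, h3⟩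
      exact ⟨h1, h2, h3⟩
    · rintro ⟨h1, h2, h3⟩
      exact ⟨Or.inl h1, ⟨h1, h2⟩, h3⟩
  rw [hcongr]
  have hbij : (univ.filter (fun ab : ZMod p × ZMod p =>
      ab.1 ≠ 0 ∧ ab.2 ≠ 0 ∧ ab.1 + ab.2 ≠ 0)).card =
      (univ.filter (fun x : ZMod p × ZMod p =>
        x.1 ≠ 0 ∧ x.2 ≠ 0 ∧ x.2 ≠ -1)).card := by
    refine Finset.card_bij' (fun ab _ => (ab.1, ab.1⁻¹ * ab.2))
      (fun x _ => (x.1, x.1 * x.2)) ?_ ?_ ?_ ?_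
    · intro ab hab
      simp only [Finset.mem_filter, Finset.mem_univ, true_and] at hab ⊢
      obtain ⟨h1, h2, h3⟩ := hab
      refine ⟨h1, mul_ne_zero (inv_ne_zero h1) h2, ?_⟩
      intro h
      apply h3
      have hb : ab.2 = ab.1 * (ab.1⁻¹ * ab.2) := (mul_inv_cancel_left₀ h1 ab.2).symm
      rw [h] at hb
      rw [hb]; ring
    · intro x hx
      simp only [Finset.mem_filter, Finset.mem_univ, true_and] at hx ⊢
      obtain ⟨h1, h2, h3⟩ := hx
      refine ⟨h1, mul_ne_zero h1 h2, ?_⟩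
      have : x.1 + x.1 * x.2 = x.1 * (1 + x.2) := by ring
      rw [this]
      apply mul_ne_zero h1
      intro h
      exact h3 (by linear_combination h)
    · intro ab hab
      simp only [Finset.mem_filter, Finset.mem_univ, true_and] at hab
      simp [mul_inv_cancel_left₀ hab.1]
    · intro x hx
      simp only [Finset.mem_filter, Finset.mem_univ, true_and] at hx
      simp [inv_mul_cancel_left₀ hx.1]
  rw [hbij]
  have hsplit : (univ.filter (fun x : ZMod p × ZMod p =>
      x.1 ≠ 0 ∧ x.2 ≠ 0 ∧ x.2 ≠ -1)) =
      (univ.filter (fun a : ZMod p => a ≠ 0)) ×ˢ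
      (univ.filter (fun c : ZMod p => c ≠ 0 ∧ c ≠ -1)) := by
    ext x
    simp [Finset.mem_product, and_assoc]
  rw [hsplit, Finset.card_product]
  have h1 : (univ.filter (fun a : ZMod p => a ≠ 0)).card = p - 1 := by
    rw [Finset.filter_ne' univ (0 : ZMod p),
      Finset.card_erase_of_mem (Finset.mem_univ _), Finset.card_univ, ZMod.card p]
  have h2 : (univ.filter (fun c : ZMod p => c ≠ 0 ∧ c ≠ -1)).card = p - 2 := by
    have he : (univ.filter (fun c : ZMod p => c ≠ 0 ∧ c ≠ -1)) =
        univ \ ({0, -1} : Finset (ZMod p)) := by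
      ext c
      simp only [Finset.mem_filter, Finset.mem_univ, true_and, Finset.mem_sdiff,
        Finset.mem_insert, Finset.mem_singleton]
      tauto
    rw [he, Finset.card_sdiff_of_subset (Finset.subset_univ _), Finset.card_univ, ZMod.card p]
    have hne : (0 : ZMod p) ≠ -1 := by
      intro h
      have : (1 : ZMod p) = 0 := by linear_combination h
      exact one_ne_zero this
    rw [Finset.card_insert_of_notMem (by simpa using hne), Finset.card_singleton]
  rw [h1, h2]


/-- Let `p` be an odd prime and `f(a,b) = ab(a+b)` the binary cubic form of the split
cubic algebra `ℤ_p³`.  With respect to the Haar measure giving `ℤ_p²` total mass `1`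
(computed here exactly as a count of residues modulo `p^{m+1}`, which determines the
conditions), the measure of primitive pairs `(a,b) ∈ ℤ_p²` with `|f(a,b)|_p = p^{-m}`
equals `3(p-1)² p^{-m-2}` for `m ≥ 1`, and the measure of primitive pairs with
`|f(a,b)|_p = 1` equals `(p-2)(p-1)/p²`. -/
theorem density_split_cubic_form
    (p : ℕ) (hp : p.Prime) (hodd : Odd p) (m : ℕ) :
    (1 ≤ m →
      ((Nat.card {ab : ZMod (p ^ (m + 1)) × ZMod (p ^ (m + 1)) //
          (IsUnit ab.1 ∨ IsUnit ab.2) ∧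
          (p : ZMod (p ^ (m + 1))) ^ m ∣ ab.1 * ab.2 * (ab.1 + ab.2) ∧
          ab.1 * ab.2 * (ab.1 + ab.2) ≠ 0} : ℚ) / (p : ℚ) ^ (2 * (m + 1))
        = 3 * ((p : ℚ) - 1) ^ 2 / (p : ℚ) ^ (m + 2))) ∧
    ((Nat.card {ab : ZMod p × ZMod p //
        (IsUnit ab.1 ∨ IsUnit ab.2) ∧ IsUnit (ab.1 * ab.2 * (ab.1 + ab.2))} : ℚ)
        / (p : ℚ) ^ 2
      = ((p : ℚ) - 2) * ((p : ℚ) - 1) / (p : ℚ) ^ 2) := by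
  have hp0 : (p : ℚ) ≠ 0 := Nat.cast_ne_zero.mpr hp.ne_zero
  have hc1 : ((p - 1 : ℕ) : ℚ) = (p : ℚ) - 1 := by
    rw [Nat.cast_sub hp.one_lt.le]; norm_num
  have hc2 : ((p - 2 : ℕ) : ℚ) = (p : ℚ) - 2 := by
    rw [Nat.cast_sub hp.two_le]; norm_num
  constructor
  · intro hm
    rw [main_count hp hm]
    have hpow : (p : ℚ) ^ (2 * (m + 1)) = (p : ℚ) ^ (m + 2) * (p : ℚ) ^ m := by
      rw [← pow_add]; congr 1; omega
    rw [hpow]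
    push_cast [hc1]
    rw [div_eq_div_iff (by positivity) (by positivity)]
    ring
  · rw [count2 hp]
    push_cast [hc1, hc2]
    ring
end

section
/- Let p be an odd prime, let ε ∈ ℤ_p^× be a quadratic non-residue modulo p, and let f(a,b) = a(a^2 − ε b^2). For m ≥ 1, the measure of primitive pairs (a,b) ∈ ℤ_p^2 with |f(a,b)|_p = p^{−m} equals (p−1)^2 p^{−m−2}, and the measure of primitive pairs with |f(a,b)|_p = 1 equals (p−1)/p. -/
section helpers

variable {p : ℕ} [hp : Fact p.Prime]

lemma nonsq_aux {ε : ℤ} (hε : ¬ IsSquare ((ε : ℤ) : ZMod p)) {x y : ZMod p}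
    (h : x ^ 2 = (ε : ZMod p) * y ^ 2) : x = 0 ∧ y = 0 := by
  by_cases hy : y = 0
  · subst hy
    simp only [ne_eq, OfNat.ofNat_ne_zero, not_false_eq_true, zero_pow, mul_zero] at h
    exact ⟨(pow_eq_zero_iff two_ne_zero).mp h, rfl⟩
  · exfalso
    apply hε
    refine ⟨x * y⁻¹, ?_⟩
    rw [← sq, mul_pow, h, inv_pow, mul_assoc, mul_inv_cancel₀ (pow_ne_zero 2 hy), mul_one]

lemma isUnit_zmod_pow_iff {k : ℕ} (hk : k ≠ 0) (x : ZMod (p ^ k)) :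
    IsUnit x ↔ ZMod.castHom (dvd_pow_self p hk) (ZMod p) x ≠ 0 := by
  have hφ : ZMod.castHom (dvd_pow_self p hk) (ZMod p) x = (x.val : ZMod p) := by
    conv_lhs => rw [← ZMod.natCast_zmod_val x]
    simp
  conv_lhs => rw [← ZMod.natCast_zmod_val x]
  rw [ZMod.isUnit_iff_coprime, Nat.coprime_pow_right_iff (Nat.pos_of_ne_zero hk),
    Nat.coprime_comm, hp.out.coprime_iff_not_dvd, hφ, Ne, ZMod.natCast_eq_zero_iff]

lemma dvd_iff_mem_zmultiples {N : ℕ} [NeZero N] (c x : ZMod N) :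
    c ∣ x ↔ x ∈ AddSubgroup.zmultiples c := by
  rw [AddSubgroup.mem_zmultiples_iff]
  constructor
  · rintro ⟨b, rfl⟩
    exact ⟨(b.val : ℤ), by rw [zsmul_eq_mul, Int.cast_natCast, ZMod.natCast_zmod_val, mul_comm]⟩
  · rintro ⟨z, rfl⟩
    exact ⟨(z : ZMod N), by rw [zsmul_eq_mul, mul_comm]⟩

lemma card_pm_dvd {m : ℕ} :
    Nat.card {a : ZMod (p ^ (m + 1)) //
      (p : ZMod (p ^ (m + 1))) ^ m ∣ a ∧ a ≠ 0} = p - 1 := by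
  set c : ZMod (p ^ (m + 1)) := (p : ZMod (p ^ (m + 1))) ^ m with hcdef
  have hc : c = ((p ^ m : ℕ) : ZMod (p ^ (m + 1))) := by push_cast; rfl
  have h2 : {a : ZMod (p ^ (m + 1)) | c ∣ a}
      = (AddSubgroup.zmultiples c : Set (ZMod (p ^ (m + 1)))) := by
    ext a; exact dvd_iff_mem_zmultiples c a
  have hcard2 : ({a : ZMod (p ^ (m + 1)) | c ∣ a}).ncard = p := by
    rw [← Nat.card_coe_set_eq, h2]
    rw [show (Nat.card ((AddSubgroup.zmultiples c : Set (ZMod (p ^ (m + 1)))))) =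
      Nat.card (AddSubgroup.zmultiples c) from rfl, Nat.card_zmultiples, hc,
      ZMod.addOrderOf_coe _ (NeZero.ne (p ^ (m + 1))),
      Nat.gcd_comm, Nat.gcd_eq_left (pow_dvd_pow p (Nat.le_succ m)),
      pow_succ, Nat.mul_div_cancel_left _ (Nat.pow_pos (n := m) hp.out.pos)]
  have h1 : {a : ZMod (p ^ (m + 1)) | c ∣ a ∧ a ≠ 0}
      = {a : ZMod (p ^ (m + 1)) | c ∣ a} \ {0} := by
    ext a; simp [and_comm]
  have hmem : (0 : ZMod (p ^ (m + 1))) ∈ {a : ZMod (p ^ (m + 1)) | c ∣ a} := dvd_zero c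
  have h0 : Nat.card {a : ZMod (p ^ (m + 1)) // c ∣ a ∧ a ≠ 0}
      = ({a : ZMod (p ^ (m + 1)) | c ∣ a ∧ a ≠ 0}).ncard := Nat.card_coe_set_eq _
  rw [h0, h1, Set.ncard_diff_singleton_of_mem hmem, hcard2]

lemma card_isUnit {N : ℕ} [NeZero N] :
    Nat.card {b : ZMod N // IsUnit b} = N.totient := by
  rw [Nat.card_congr
    (⟨fun x => x.2.unit, fun u => ⟨u, u.isUnit⟩, fun x => Subtype.ext x.2.unit_spec,
      fun u => Units.ext (IsUnit.unit_spec _)⟩ : {b : ZMod N // IsUnit b} ≃ (ZMod N)ˣ),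
    Nat.card_eq_fintype_card, ZMod.card_units_eq_totient]

end helpers


/-- Let `p` be an odd prime, `ε ∈ ℤ_p^×` a quadratic non-residue mod `p`, and
`f(a,b) = a(a² - ε b²)` (the binary cubic form of the cubic étale algebra
`ℚ_p × ℚ_{p²}`).  With respect to the Haar measure giving `ℤ_p²` total mass `1`
(computed here exactly as a count of residues modulo `p^{m+1}`), the measure of
primitive pairs `(a,b) ∈ ℤ_p²` with `|f(a,b)|_p = p^{-m}` equals `(p-1)² p^{-m-2}`
for `m ≥ 1`, and the measure of primitive pairs with `|f(a,b)|_p = 1` equals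
`(p-1)/p`. -/
theorem density_partially_split_cubic_form
    (p : ℕ) (hp : p.Prime) (hodd : Odd p) (ε : ℤ)
    (hε : ¬ IsSquare ((ε : ℤ) : ZMod p)) (m : ℕ) :
    (1 ≤ m →
      ((Nat.card {ab : ZMod (p ^ (m + 1)) × ZMod (p ^ (m + 1)) //
          (IsUnit ab.1 ∨ IsUnit ab.2) ∧
          (p : ZMod (p ^ (m + 1))) ^ m ∣ ab.1 * (ab.1 ^ 2 - (ε : ZMod (p ^ (m + 1))) * ab.2 ^ 2) ∧
          ab.1 * (ab.1 ^ 2 - (ε : ZMod (p ^ (m + 1))) * ab.2 ^ 2) ≠ 0} : ℚ)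
        / (p : ℚ) ^ (2 * (m + 1))
        = ((p : ℚ) - 1) ^ 2 / (p : ℚ) ^ (m + 2))) ∧
    ((Nat.card {ab : ZMod p × ZMod p //
        (IsUnit ab.1 ∨ IsUnit ab.2) ∧
        IsUnit (ab.1 * (ab.1 ^ 2 - (ε : ZMod p) * ab.2 ^ 2))} : ℚ) / (p : ℚ) ^ 2
      = ((p : ℚ) - 1) / (p : ℚ)) := by
  haveI : Fact p.Prime := ⟨hp⟩
  have hp0 : (p : ℚ) ≠ 0 := Nat.cast_ne_zero.mpr hp.pos.ne'
  constructor
  · intro hm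
    set φ := ZMod.castHom (dvd_pow_self p (Nat.succ_ne_zero m)) (ZMod p) with hφdef
    have unit_iff : ∀ x : ZMod (p ^ (m + 1)), IsUnit x ↔ φ x ≠ 0 :=
      fun x => isUnit_zmod_pow_iff (Nat.succ_ne_zero m) x
    have hpnotunit : ¬ IsUnit (p : ZMod (p ^ (m + 1))) := by
      rw [unit_iff]
      simp
    have hkey2 : ∀ a b : ZMod (p ^ (m + 1)), (IsUnit a ∨ IsUnit b) →
        IsUnit (a ^ 2 - (ε : ZMod (p ^ (m + 1))) * b ^ 2) := by
      intro a b hab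
      rw [unit_iff]
      intro h0
      rw [map_sub, map_pow, map_mul, map_pow, map_intCast] at h0
      obtain ⟨ha0, hb0⟩ := nonsq_aux hε (sub_eq_zero.mp h0)
      rcases hab with h | h
      · exact (unit_iff a).mp h ha0
      · exact (unit_iff b).mp h hb0
    have key : ∀ ab : ZMod (p ^ (m + 1)) × ZMod (p ^ (m + 1)),
        ((IsUnit ab.1 ∨ IsUnit ab.2) ∧
          (p : ZMod (p ^ (m + 1))) ^ m ∣ ab.1 * (ab.1 ^ 2 - (ε : ZMod (p ^ (m + 1))) * ab.2 ^ 2) ∧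
          ab.1 * (ab.1 ^ 2 - (ε : ZMod (p ^ (m + 1))) * ab.2 ^ 2) ≠ 0) ↔
        (((p : ZMod (p ^ (m + 1))) ^ m ∣ ab.1 ∧ ab.1 ≠ 0) ∧ IsUnit ab.2) := by
      rintro ⟨a, b⟩
      dsimp only
      constructor
      · rintro ⟨hab, hdvd, hne⟩
        have hu := hkey2 a b hab
        have hna : ¬ IsUnit a := by
          intro ha
          exact hpnotunit (isUnit_of_dvd_unit
            ((dvd_pow_self (p : ZMod (p ^ (m + 1))) (by omega : m ≠ 0)).trans hdvd)
            (ha.mul hu))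
        have hb : IsUnit b := hab.resolve_left hna
        refine ⟨⟨(hu.dvd_mul_right).mp hdvd, fun h0 => hne (by rw [h0, zero_mul])⟩, hb⟩
      · rintro ⟨⟨hdvd, hne⟩, hb⟩
        have hu := hkey2 a b (Or.inr hb)
        exact ⟨Or.inr hb, dvd_mul_of_dvd_left hdvd _,
          fun h0 => hne ((hu.mul_left_eq_zero).mp h0)⟩
    rw [Nat.card_congr ((Equiv.subtypeEquivRight key).trans
      (Equiv.subtypeProdEquivProd
        (p := fun a : ZMod (p ^ (m + 1)) => (p : ZMod (p ^ (m + 1))) ^ m ∣ a ∧ a ≠ 0)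
        (q := fun b : ZMod (p ^ (m + 1)) => IsUnit b))),
      Nat.card_prod, card_pm_dvd, card_isUnit, Nat.totient_prime_pow hp (Nat.succ_pos m),
      Nat.succ_sub_one]
    have h1p : (1 : ℚ) ≤ (p : ℚ) := by exact_mod_cast hp.one_le
    push_cast [Nat.cast_sub hp.one_le]
    field_simp
    ring
  · have key2 : ∀ ab : ZMod p × ZMod p,
        ((IsUnit ab.1 ∨ IsUnit ab.2) ∧
          IsUnit (ab.1 * (ab.1 ^ 2 - (ε : ZMod p) * ab.2 ^ 2))) ↔
        (ab.1 ≠ 0 ∧ True) := by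
      rintro ⟨a, b⟩
      dsimp only
      constructor
      · rintro ⟨-, hf⟩
        exact ⟨(isUnit_of_mul_isUnit_left hf).ne_zero, trivial⟩
      · rintro ⟨ha, -⟩
        have hau : IsUnit a := isUnit_iff_ne_zero.mpr ha
        have h2 : a ^ 2 - (ε : ZMod p) * b ^ 2 ≠ 0 := fun h0 =>
          ha (nonsq_aux hε (sub_eq_zero.mp h0)).1
        exact ⟨Or.inl hau, hau.mul (isUnit_iff_ne_zero.mpr h2)⟩
    rw [Nat.card_congr ((Equiv.subtypeEquivRight key2).trans
      (Equiv.subtypeProdEquivProd (p := fun a : ZMod p => a ≠ 0)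
        (q := fun _ : ZMod p => True))),
      Nat.card_prod, Nat.card_congr (unitsEquivNeZero (G₀ := ZMod p)).symm,
      Nat.card_eq_fintype_card, ZMod.card_units_eq_totient, Nat.totient_prime hp,
      Nat.card_congr (Equiv.subtypeUnivEquiv fun _ => trivial),
      Nat.card_eq_fintype_card, ZMod.card]
    push_cast [Nat.cast_sub hp.one_le]
    field_simp
end

section
/- Let p be an odd prime, π a uniformizer of ℤ_p, and f(a,b) = a^3 − π b^3 (resp. the binary cubic form of the totally ramified cubic extension of type (1^3)). Then the measure of primitive pairs (a,b) ∈ ℤ_p^2 with |f(a,b)|_p = 1 is (p−1)/p, the measure with |f(a,b)|_p = p^{−1} is (p−1)/p^2, and the measure with |f(a,b)|_p = p^{−m} for m ≥ 2 is 0. -/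
lemma val_dvd_iff {n d : ℕ} [NeZero n] (hdn : d ∣ n) (a : ZMod n) :
    (d : ZMod n) ∣ a ↔ d ∣ a.val := by
  constructor
  · rintro ⟨c, rfl⟩
    rw [ZMod.val_mul, Nat.dvd_mod_iff hdn, ZMod.val_natCast]
    exact Dvd.dvd.mul_right ((Nat.dvd_mod_iff hdn).mpr dvd_rfl) _
  · rintro ⟨t, ht⟩
    refine ⟨(t : ZMod n), ?_⟩
    have : ((a.val : ℕ) : ZMod n) = a := by simp [ZMod.natCast_val, ZMod.cast_id]
    rw [← this, ht]
    push_cast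
    ring

lemma isUnit_zmod_iff {p k : ℕ} (hp : p.Prime) (hk : 0 < k) [NeZero (p ^ k)]
    (a : ZMod (p ^ k)) : IsUnit a ↔ ¬ p ∣ a.val := by
  have h : ((a.val : ℕ) : ZMod (p ^ k)) = a := by simp [ZMod.natCast_val, ZMod.cast_id]
  rw [← h, ZMod.isUnit_iff_coprime, Nat.coprime_pow_right_iff hk,
    Nat.coprime_comm, Nat.Prime.coprime_iff_not_dvd hp, h]

lemma dvd_of_dvd_cube {p k : ℕ} (hp : p.Prime) (hk : 0 < k) [NeZero (p ^ k)]
    {a : ZMod (p ^ k)} (h : (p : ZMod (p ^ k)) ∣ a ^ 3) : (p : ZMod (p ^ k)) ∣ a := by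
  have hpn : p ∣ p ^ k := dvd_pow_self p hk.ne'
  rw [val_dvd_iff hpn] at h ⊢
  have h3 : a ^ 3 = ((a.val ^ 3 : ℕ) : ZMod (p ^ k)) := by
    push_cast
    simp [ZMod.natCast_val, ZMod.cast_id]
  rw [h3, ZMod.val_natCast, Nat.dvd_mod_iff hpn] at h
  exact hp.dvd_of_dvd_pow h

lemma card_val_dvd (d q : ℕ) (hd : 0 < d) [NeZero (d * q)] :
    (Finset.univ.filter fun a : ZMod (d * q) => d ∣ a.val).card = q := by
  have h : (Finset.univ.filter fun a : ZMod (d * q) => d ∣ a.val).card = (Finset.range q).card := by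
    refine Finset.card_bij' (fun a _ => a.val / d) (fun x _ => ((d * x : ℕ) : ZMod (d * q)))
      ?_ ?_ ?_ ?_
    · intro a ha
      rw [Finset.mem_range, Nat.div_lt_iff_lt_mul hd]
      exact lt_of_lt_of_eq a.val_lt (mul_comm d q)
    · intro x hx
      rw [Finset.mem_filter]
      refine ⟨Finset.mem_univ _, ?_⟩
      rw [ZMod.val_natCast, Nat.dvd_mod_iff (Dvd.intro q rfl)]
      exact Dvd.intro x rfl
    · intro a ha
      rw [Finset.mem_filter] at ha
      show ((d * (a.val / d) : ℕ) : ZMod (d * q)) = a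
      rw [Nat.mul_div_cancel' ha.2]
      simp [ZMod.natCast_val, ZMod.cast_id]
    · intro x hx
      rw [Finset.mem_range] at hx
      show ((d * x : ℕ) : ZMod (d * q)).val / d = x
      rw [ZMod.val_natCast, Nat.mod_eq_of_lt ((Nat.mul_lt_mul_left hd).mpr hx),
        Nat.mul_div_cancel_left _ hd]
  rw [h, Finset.card_range]

lemma nat_card_dvd (d q : ℕ) (hd : 0 < d) [NeZero (d * q)] :
    Nat.card {a : ZMod (d * q) // d ∣ a.val} = q := by
  rw [Nat.card_eq_fintype_card, Fintype.card_subtype, card_val_dvd d q hd]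

lemma nat_card_not_dvd (d q : ℕ) (hd : 0 < d) [NeZero (d * q)] :
    Nat.card {a : ZMod (d * q) // ¬ d ∣ a.val} = d * q - q := by
  rw [Nat.card_eq_fintype_card, Fintype.card_subtype, Finset.filter_not,
    Finset.card_sdiff_of_subset (Finset.filter_subset _ _), Finset.card_univ, ZMod.card,
    card_val_dvd d q hd]

lemma nat_card_prod_subtype {α β : Type*} (P : α → Prop) (Q : β → Prop) :
    Nat.card {ab : α × β // P ab.1 ∧ Q ab.2}
      = Nat.card {a // P a} * Nat.card {b // Q b} := by
  rw [Nat.card_congr (Equiv.subtypeProdEquivProd), Nat.card_prod]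

lemma zmod_sq_key {p : ℕ} (hp : p.Prime) {π c : ℤ} (hπc : π = p * c)
    (hc : ¬ (p : ℤ) ∣ c) {a b : ZMod (p ^ 2)} (ha : (p : ZMod (p ^ 2)) ∣ a)
    (hb : IsUnit b) :
    (p : ZMod (p ^ 2)) ∣ a ^ 3 - (π : ZMod (p ^ 2)) * b ^ 3 ∧
      a ^ 3 - (π : ZMod (p ^ 2)) * b ^ 3 ≠ 0 := by
  have hp2 : (p : ZMod (p ^ 2)) ^ 2 = 0 := by
    have : ((p ^ 2 : ℕ) : ZMod (p ^ 2)) = 0 := ZMod.natCast_self _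
    push_cast at this
    exact this
  obtain ⟨t, rfl⟩ := ha
  have ha3 : ((p : ZMod (p ^ 2)) * t) ^ 3 = 0 := by
    have : ((p : ZMod (p ^ 2)) * t) ^ 3 = (p : ZMod (p ^ 2)) ^ 2 * (p * t ^ 3) := by ring
    rw [this, hp2, zero_mul]
  have hπ' : ((π : ℤ) : ZMod (p ^ 2)) = (p : ZMod (p ^ 2)) * (c : ZMod (p ^ 2)) := by
    rw [hπc]; push_cast; ring
  have hf : ((p : ZMod (p ^ 2)) * t) ^ 3 - (π : ZMod (p ^ 2)) * b ^ 3
      = (p : ZMod (p ^ 2)) * (-(c : ZMod (p ^ 2)) * b ^ 3) := by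
    rw [ha3, hπ']; ring
  constructor
  · exact ⟨_, hf⟩
  · rw [hf]
    intro h0
    have h1 : (p : ZMod (p ^ 2)) * (-(c : ZMod (p ^ 2))) * b ^ 3 = 0 := by
      rw [← h0]; ring
    rw [(hb.pow 3).mul_left_eq_zero] at h1
    have h2 : (((p : ℤ) * (-c) : ℤ) : ZMod (p ^ 2)) = 0 := by push_cast; rw [← h1]
    rw [ZMod.intCast_zmod_eq_zero_iff_dvd] at h2
    push_cast at h2
    obtain ⟨e, he⟩ := h2
    have hp0 : (p : ℤ) ≠ 0 := by exact_mod_cast hp.ne_zero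
    have : -c = p * e := by
      apply mul_left_cancel₀ hp0
      rw [he]; ring
    exact hc (dvd_neg.mp ⟨e, this⟩)

/-- Let `p` be an odd prime, `π` a uniformizer of `ℤ_p` (an element of valuation
exactly `1`), and `f(a,b) = a³ - π b³` the binary cubic form of the totally ramified
cubic extension of type `(1³)`.  With respect to the Haar measure giving `ℤ_p²` total
mass `1` (computed exactly as a count of residues modulo `p^{m+1}`), the measure of
primitive pairs `(a,b) ∈ ℤ_p²` with `|f(a,b)|_p = 1` is `(p-1)/p`, the measure with
`|f(a,b)|_p = p^{-1}` is `(p-1)/p²`, and the measure with `|f(a,b)|_p = p^{-m}` for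
`m ≥ 2` is `0`. -/
theorem density_totally_ramified_cubic_form
    (p : ℕ) (hp : p.Prime) (hodd : Odd p) (π : ℤ)
    (hπ : (p : ℤ) ∣ π) (hπ2 : ¬ (p : ℤ) ^ 2 ∣ π) :
    ((Nat.card {ab : ZMod p × ZMod p //
        (IsUnit ab.1 ∨ IsUnit ab.2) ∧
        IsUnit (ab.1 ^ 3 - (π : ZMod p) * ab.2 ^ 3)} : ℚ) / (p : ℚ) ^ 2
      = ((p : ℚ) - 1) / (p : ℚ)) ∧
    ((Nat.card {ab : ZMod (p ^ 2) × ZMod (p ^ 2) //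
        (IsUnit ab.1 ∨ IsUnit ab.2) ∧
        (p : ZMod (p ^ 2)) ∣ ab.1 ^ 3 - (π : ZMod (p ^ 2)) * ab.2 ^ 3 ∧
        ab.1 ^ 3 - (π : ZMod (p ^ 2)) * ab.2 ^ 3 ≠ 0} : ℚ) / (p : ℚ) ^ 4
      = ((p : ℚ) - 1) / (p : ℚ) ^ 2) ∧
    (∀ m : ℕ, 2 ≤ m →
      Nat.card {ab : ZMod (p ^ (m + 1)) × ZMod (p ^ (m + 1)) //
        (IsUnit ab.1 ∨ IsUnit ab.2) ∧
        (p : ZMod (p ^ (m + 1))) ^ m ∣ ab.1 ^ 3 - (π : ZMod (p ^ (m + 1))) * ab.2 ^ 3 ∧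
        ab.1 ^ 3 - (π : ZMod (p ^ (m + 1))) * ab.2 ^ 3 ≠ 0} = 0) := by
  obtain ⟨c, hπc⟩ := hπ
  have hc : ¬ (p : ℤ) ∣ c := by
    rintro ⟨e, he⟩
    exact hπ2 ⟨e, by rw [hπc, he]; ring⟩
  haveI : Fact p.Prime := ⟨hp⟩
  haveI : NeZero p := ⟨hp.ne_zero⟩
  have hp0 : (p : ℚ) ≠ 0 := Nat.cast_ne_zero.mpr hp.ne_zero
  have hp1 : 1 ≤ p := hp.one_lt.le
  refine ⟨?_, ?_, ?_⟩
  · -- part 1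
    have hπ0 : ((π : ℤ) : ZMod p) = 0 := by
      rw [hπc]; push_cast; simp
    have hiff : ∀ ab : ZMod p × ZMod p,
        ((IsUnit ab.1 ∨ IsUnit ab.2) ∧ IsUnit (ab.1 ^ 3 - (π : ZMod p) * ab.2 ^ 3))
          ↔ ((fun a => IsUnit a) ab.1 ∧ (fun _ => True) ab.2) := by
      intro ab
      simp only [hπ0, zero_mul, sub_zero]
      exact ⟨fun h => ⟨(isUnit_pow_iff (three_ne_zero)).mp h.2, trivial⟩,
        fun h => ⟨Or.inl h.1, h.1.pow 3⟩⟩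
    rw [Nat.card_congr (Equiv.subtypeEquivRight hiff),
      nat_card_prod_subtype (fun a : ZMod p => IsUnit a) (fun _ : ZMod p => True)]
    have h1 : Nat.card {a : ZMod p // IsUnit a} = p - 1 := by
      rw [Nat.card_congr (Equiv.subtypeEquivRight
        (fun a : ZMod p => isUnit_iff_ne_zero (a := a))),
        Nat.card_eq_fintype_card, Fintype.card_subtype_compl,
        Fintype.card_subtype_eq, ZMod.card]
    have h2 : Nat.card {b : ZMod p // True} = p := by
      rw [Nat.card_congr (Equiv.subtypeUnivEquiv fun _ => trivial),
        Nat.card_eq_fintype_card, ZMod.card]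
    rw [h1, h2]
    rw [Nat.cast_mul, Nat.cast_sub hp1]
    push_cast
    field_simp
  · -- part 2
    have h2lt : 0 < 2 := by norm_num
    have hπ' : ((π : ℤ) : ZMod (p ^ 2)) = (p : ZMod (p ^ 2)) * (c : ZMod (p ^ 2)) := by
      rw [hπc]; push_cast; ring
    have hiff : ∀ ab : ZMod (p ^ 2) × ZMod (p ^ 2),
        ((IsUnit ab.1 ∨ IsUnit ab.2) ∧
          (p : ZMod (p ^ 2)) ∣ ab.1 ^ 3 - (π : ZMod (p ^ 2)) * ab.2 ^ 3 ∧
          ab.1 ^ 3 - (π : ZMod (p ^ 2)) * ab.2 ^ 3 ≠ 0)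
          ↔ ((fun a => p ∣ a.val) ab.1 ∧ (fun b => ¬ p ∣ b.val) ab.2) := by
      intro ⟨a, b⟩
      simp only
      constructor
      · rintro ⟨h1, h2, h3⟩
        have hdiva3 : (p : ZMod (p ^ 2)) ∣ a ^ 3 := by
          have heq : a ^ 3 = (a ^ 3 - (π : ZMod (p ^ 2)) * b ^ 3)
              + (p : ZMod (p ^ 2)) * ((c : ZMod (p ^ 2)) * b ^ 3) := by
            rw [hπ']; ring
          rw [heq]
          exact dvd_add h2 (Dvd.intro _ rfl)
        have hdiva := dvd_of_dvd_cube hp h2lt hdiva3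
        rw [val_dvd_iff (dvd_pow_self p (by norm_num : (2:ℕ) ≠ 0))] at hdiva
        have hnu : ¬ IsUnit a := by
          rw [isUnit_zmod_iff hp h2lt]
          exact not_not_intro hdiva
        exact ⟨hdiva, ((isUnit_zmod_iff hp h2lt b).mp (h1.resolve_left hnu))⟩
      · rintro ⟨ha, hb⟩
        have ha' : (p : ZMod (p ^ 2)) ∣ a :=
          (val_dvd_iff (dvd_pow_self p (by norm_num : (2:ℕ) ≠ 0)) a).mpr ha
        have hb' : IsUnit b := (isUnit_zmod_iff hp h2lt b).mpr hb
        obtain ⟨k1, k2⟩ := zmod_sq_key hp hπc hc ha' hb'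
        exact ⟨Or.inr hb', k1, k2⟩
    rw [Nat.card_congr (Equiv.subtypeEquivRight hiff),
      nat_card_prod_subtype (fun a : ZMod (p ^ 2) => p ∣ a.val) (fun b : ZMod (p ^ 2) => ¬ p ∣ b.val)]
    have hpq : p ^ 2 = p * p := by ring
    have h1 : Nat.card {a : ZMod (p ^ 2) // p ∣ a.val} = p := by
      rw [hpq] at *
      exact nat_card_dvd p p hp.pos
    have h2 : Nat.card {b : ZMod (p ^ 2) // ¬ p ∣ b.val} = p * p - p := by
      rw [hpq] at *
      exact nat_card_not_dvd p p hp.pos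
    rw [h1, h2]
    have hple : p ≤ p * p := Nat.le_mul_of_pos_left p hp.pos
    rw [Nat.cast_mul, Nat.cast_sub hple]
    push_cast
    field_simp
  · -- part 3
    intro m hm
    haveI : NeZero (p ^ (m + 1)) := ⟨pow_ne_zero _ hp.ne_zero⟩
    have hk : 0 < m + 1 := Nat.succ_pos m
    have hpn : p ∣ p ^ (m + 1) := dvd_pow_self p (Nat.succ_ne_zero m)
    have hpm : p ^ m ∣ p ^ (m + 1) := pow_dvd_pow p (Nat.le_succ m)
    haveI : IsEmpty {ab : ZMod (p ^ (m + 1)) × ZMod (p ^ (m + 1)) //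
        (IsUnit ab.1 ∨ IsUnit ab.2) ∧
        (p : ZMod (p ^ (m + 1))) ^ m ∣ ab.1 ^ 3 - (π : ZMod (p ^ (m + 1))) * ab.2 ^ 3 ∧
        ab.1 ^ 3 - (π : ZMod (p ^ (m + 1))) * ab.2 ^ 3 ≠ 0} := by
      refine ⟨?_⟩
      rintro ⟨⟨a, b⟩, h1, h2, h3⟩
      dsimp only at h1 h2 h3
      set f : ZMod (p ^ (m + 1)) := a ^ 3 - (π : ZMod (p ^ (m + 1))) * b ^ 3 with hfdef
      have hπ' : ((π : ℤ) : ZMod (p ^ (m + 1))) = (p : ZMod (p ^ (m + 1))) * (c : ZMod (p ^ (m + 1))) := by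
        rw [hπc]; push_cast; ring
      have h2' : p ^ m ∣ f.val := by
        have hcast : ((p ^ m : ℕ) : ZMod (p ^ (m + 1))) ∣ f := by push_cast; exact h2
        exact (val_dvd_iff hpm f).mp hcast
      have hpf : (p : ZMod (p ^ (m + 1))) ∣ f :=
        (val_dvd_iff hpn f).mpr (dvd_trans (dvd_pow_self p (by omega : m ≠ 0)) h2')
      have hdiva3 : (p : ZMod (p ^ (m + 1))) ∣ a ^ 3 := by
        have heq : a ^ 3 = f + (p : ZMod (p ^ (m + 1))) * ((c : ZMod (p ^ (m + 1))) * b ^ 3) := by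
          rw [hfdef, hπ']; ring
        rw [heq]
        exact dvd_add hpf (Dvd.intro _ rfl)
      have hdiva : (p : ZMod (p ^ (m + 1))) ∣ a := dvd_of_dvd_cube hp hk hdiva3
      have hnu : ¬ IsUnit a := by
        rw [isUnit_zmod_iff hp hk]
        exact not_not_intro ((val_dvd_iff hpn a).mp hdiva)
      have hb : IsUnit b := h1.resolve_left hnu
      have hsq : p ^ 2 ∣ p ^ (m + 1) := pow_dvd_pow p (by omega)
      let φ : ZMod (p ^ (m + 1)) →+* ZMod (p ^ 2) := ZMod.castHom hsq (ZMod (p ^ 2))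
      have hφa : (p : ZMod (p ^ 2)) ∣ φ a := by
        obtain ⟨t, ht⟩ := hdiva
        exact ⟨φ t, by rw [ht, map_mul, map_natCast]⟩
      have hφb : IsUnit (φ b) := hb.map φ
      obtain ⟨-, hkey⟩ := zmod_sq_key hp hπc hc hφa hφb
      apply hkey
      have hfval : p ^ 2 ∣ f.val := dvd_trans (pow_dvd_pow p hm) h2'
      have hrep : ((f.val : ℕ) : ZMod (p ^ (m + 1))) = f := by simp [ZMod.natCast_val, ZMod.cast_id]
      have hφf : φ f = 0 := by
        rw [← hrep, map_natCast, ZMod.natCast_eq_zero_iff]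
        exact hfval
      calc (φ a) ^ 3 - (π : ZMod (p ^ 2)) * (φ b) ^ 3
          = φ f := by rw [hfdef, map_sub, map_pow, map_mul, map_pow, map_intCast]
        _ = 0 := hφf
    exact Nat.card_of_isEmpty
end

section
/- Let n ≥ 1, and let e_1 > e_2 > ⋯ > e_n > 0 and a_1,…,a_n, b_1,…,b_n be real numbers. Suppose there exist positive constants M_1, M_2 such that for all X > 1, |∑_{i=1}^n (a_i X^{e_i} log X + b_i X^{e_i})| = O(M_1 X^{1+o(1)} + M_2). Then max_i max(|a_i| X^{e_i}, |b_i| X^{e_i}) ≪ X^{o(1)} (M_1 X + M_2) for all X > 1. -/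
open Real Filter Finset

private lemma div_term_log {X u v : ℝ} (hX : 1 < X) (A B : ℝ) :
    (A * X ^ u * Real.log X + B * X ^ u) / (X ^ v * Real.log X)
      = A * X ^ (-(v - u)) + B * (X ^ (-(v - u)) * (Real.log X)⁻¹) := by
  have hX0 : (0:ℝ) < X := lt_trans one_pos hX
  have hlog : Real.log X ≠ 0 := ne_of_gt (Real.log_pos hX)
  have hpow : X ^ v ≠ 0 := ne_of_gt (Real.rpow_pos_of_pos hX0 v)
  rw [neg_sub, Real.rpow_sub hX0]
  field_simp

private lemma div_term_nolog {X u v : ℝ} (hX : 1 < X) (A B : ℝ) :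
    (A * X ^ u * Real.log X + B * X ^ u) / (X ^ v)
      = A * (X ^ (-(v - u)) * Real.log X) + B * X ^ (-(v - u)) := by
  have hX0 : (0:ℝ) < X := lt_trans one_pos hX
  have hpow : X ^ v ≠ 0 := ne_of_gt (Real.rpow_pos_of_pos hX0 v)
  rw [neg_sub, Real.rpow_sub hX0]
  field_simp

private lemma rpow_neg_mul_log_tendsto {c : ℝ} (hc : 0 < c) :
    Tendsto (fun X : ℝ => X ^ (-c) * Real.log X) atTop (nhds 0) := by
  refine ((isLittleO_log_rpow_atTop hc).tendsto_div_nhds_zero).congr' ?_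
  filter_upwards [eventually_gt_atTop (0:ℝ)] with X hX
  rw [Real.rpow_neg hX.le, div_eq_inv_mul]

private lemma rpow_neg_mul_invlog_tendsto {c : ℝ} (hc : 0 < c) :
    Tendsto (fun X : ℝ => X ^ (-c) * (Real.log X)⁻¹) atTop (nhds 0) := by
  simpa using (tendsto_rpow_neg_atTop hc).mul Real.tendsto_log_atTop.inv_tendsto_atTop

private lemma zero_coeff
    (n : ℕ) (e a b : Fin n → ℝ)
    (hanti : StrictAnti e)
    (M₁ M₂ : ℝ) (hM₁ : 0 < M₁) (hM₂ : 0 < M₂)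
    (H : ∀ ε : ℝ, 0 < ε → ∃ C : ℝ, ∀ X : ℝ, 1 < X →
      |∑ i, (a i * X ^ (e i) * Real.log X + b i * X ^ (e i))| ≤
        C * (M₁ * X ^ ((1 : ℝ) + ε) + M₂)) :
    ∀ i : Fin n, 1 < e i → a i = 0 ∧ b i = 0 := by
  suffices h : ∀ m : ℕ, ∀ i : Fin n, (i : ℕ) = m → 1 < e i → a i = 0 ∧ b i = 0 by
    intro i hi; exact h i i rfl hi
  intro m
  induction m using Nat.strong_induction_on with
  | _ m ih =>
    intro i him hi
    -- induction hypothesis in usable form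
    have IH : ∀ j : Fin n, j < i → a j = 0 ∧ b j = 0 := by
      intro j hj
      have : 1 < e j := lt_trans hi (hanti hj)
      exact ih j (by simpa [Fin.lt_def] using him ▸ hj) j rfl this
    set ε' : ℝ := (e i - 1) / 2 with hε'def
    have hε' : 0 < ε' := by simp only [hε'def]; linarith
    obtain ⟨C, hC⟩ := H ε' hε'
    set g : ℝ → ℝ := fun X => ∑ j, (a j * X ^ (e j) * Real.log X + b j * X ^ (e j)) with hg
    -- limit of g X / (X ^ e i * log X) is a i
    have hA : Tendsto (fun X => g X / (X ^ (e i) * Real.log X)) atTop (nhds (a i)) := by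
      have hterm : ∀ j : Fin n, Tendsto
          (fun X => (a j * X ^ (e j) * Real.log X + b j * X ^ (e j)) / (X ^ (e i) * Real.log X))
          atTop (nhds (if j = i then a i else 0)) := by
        intro j
        rcases lt_trichotomy j i with hj | hj | hj
        · obtain ⟨ha0, hb0⟩ := IH j hj
          simp only [ha0, hb0, zero_mul, add_zero, zero_div, if_neg (ne_of_lt hj)]
          exact tendsto_const_nhds
        · subst hj
          rw [if_pos rfl]
          have : Tendsto (fun X : ℝ => a j * X ^ (-(e j - e j)) +
              b j * (X ^ (-(e j - e j)) * (Real.log X)⁻¹)) atTop (nhds (a j)) := by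
            simp only [sub_self, neg_zero, Real.rpow_zero, mul_one, one_mul]
            simpa using tendsto_const_nhds.add
              (Real.tendsto_log_atTop.inv_tendsto_atTop.const_mul (b j))
          refine this.congr' ?_
          filter_upwards [eventually_gt_atTop (1:ℝ)] with X hX
          rw [div_term_log hX]
        · rw [if_neg (ne_of_gt hj)]
          have hc : 0 < e i - e j := sub_pos.mpr (hanti hj)
          have : Tendsto (fun X : ℝ => a j * X ^ (-(e i - e j)) +
              b j * (X ^ (-(e i - e j)) * (Real.log X)⁻¹)) atTop (nhds 0) := by
            have h1 := (tendsto_rpow_neg_atTop hc).const_mul (a j)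
            have h2 := (rpow_neg_mul_invlog_tendsto hc).const_mul (b j)
            simpa using h1.add h2
          refine this.congr' ?_
          filter_upwards [eventually_gt_atTop (1:ℝ)] with X hX
          rw [div_term_log hX]
      have := tendsto_finset_sum Finset.univ (fun j _ => hterm j)
      simp only [Finset.sum_ite_eq' Finset.univ i, Finset.mem_univ, if_true] at this
      refine this.congr' ?_
      filter_upwards [eventually_gt_atTop (1:ℝ)] with X hX
      rw [hg, Finset.sum_div]
    -- limit of g X / (X ^ e i * log X) is 0
    have hB : Tendsto (fun X => g X / (X ^ (e i) * Real.log X)) atTop (nhds 0) := by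
      have hbound : Tendsto (fun X : ℝ => |C| * (M₁ * (X ^ (-ε') * (Real.log X)⁻¹)
          + M₂ * (X ^ (-(e i)) * (Real.log X)⁻¹))) atTop (nhds 0) := by
        have h1 := (rpow_neg_mul_invlog_tendsto hε').const_mul M₁
        have h2 := (rpow_neg_mul_invlog_tendsto (by linarith : (0:ℝ) < e i)).const_mul M₂
        simpa using (h1.add h2).const_mul |C|
      refine squeeze_zero_norm' ?_ hbound
      filter_upwards [eventually_gt_atTop (1:ℝ)] with X hX
      have hX0 : (0:ℝ) < X := lt_trans one_pos hX
      have hlog : 0 < Real.log X := Real.log_pos hX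
      have hd : 0 < X ^ (e i) * Real.log X := mul_pos (Real.rpow_pos_of_pos hX0 _) hlog
      have hnum : 0 < M₁ * X ^ ((1:ℝ) + ε') + M₂ :=
        add_pos (mul_pos hM₁ (Real.rpow_pos_of_pos hX0 _)) hM₂
      have hpow : X ^ (e i) ≠ 0 := ne_of_gt (Real.rpow_pos_of_pos hX0 _)
      have key : (M₁ * X ^ ((1:ℝ) + ε') + M₂) / (X ^ (e i) * Real.log X)
          = M₁ * (X ^ (-ε') * (Real.log X)⁻¹) + M₂ * (X ^ (-(e i)) * (Real.log X)⁻¹) := by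
        have h1 : X ^ (-ε') = X ^ ((1:ℝ) + ε') / X ^ (e i) := by
          rw [← Real.rpow_sub hX0]; congr 1; simp only [hε'def]; ring
        have h2 : X ^ (-(e i)) = (X ^ (e i))⁻¹ := Real.rpow_neg hX0.le _
        rw [h1, h2]
        field_simp
      have hle : |g X| ≤ |C| * (M₁ * X ^ ((1:ℝ) + ε') + M₂) :=
        (hC X hX).trans (mul_le_mul_of_nonneg_right (le_abs_self C) hnum.le)
      calc ‖g X / (X ^ (e i) * Real.log X)‖ = |g X| / (X ^ (e i) * Real.log X) := by
            rw [Real.norm_eq_abs, abs_div, abs_of_pos hd]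
        _ ≤ |C| * (M₁ * X ^ ((1:ℝ) + ε') + M₂) / (X ^ (e i) * Real.log X) := by
            gcongr
        _ = |C| * ((M₁ * X ^ ((1:ℝ) + ε') + M₂) / (X ^ (e i) * Real.log X)) := by ring
        _ = _ := by rw [key]
    have ha0 : a i = 0 := tendsto_nhds_unique hA hB
    refine ⟨ha0, ?_⟩
    -- limit of g X / X ^ e i is b i
    have hA' : Tendsto (fun X => g X / X ^ (e i)) atTop (nhds (b i)) := by
      have hterm : ∀ j : Fin n, Tendsto
          (fun X => (a j * X ^ (e j) * Real.log X + b j * X ^ (e j)) / X ^ (e i))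
          atTop (nhds (if j = i then b i else 0)) := by
        intro j
        rcases lt_trichotomy j i with hj | hj | hj
        · obtain ⟨ha0', hb0'⟩ := IH j hj
          simp only [ha0', hb0', zero_mul, add_zero, zero_div, if_neg (ne_of_lt hj)]
          exact tendsto_const_nhds
        · subst hj
          rw [if_pos rfl]
          refine tendsto_const_nhds.congr' ?_
          filter_upwards [eventually_gt_atTop (1:ℝ)] with X hX
          rw [div_term_nolog hX]
          simp [ha0]
        · rw [if_neg (ne_of_gt hj)]
          have hc : 0 < e i - e j := sub_pos.mpr (hanti hj)
          have : Tendsto (fun X : ℝ => a j * (X ^ (-(e i - e j)) * Real.log X) +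
              b j * X ^ (-(e i - e j))) atTop (nhds 0) := by
            have h1 := (rpow_neg_mul_log_tendsto hc).const_mul (a j)
            have h2 := (tendsto_rpow_neg_atTop hc).const_mul (b j)
            simpa using h1.add h2
          refine this.congr' ?_
          filter_upwards [eventually_gt_atTop (1:ℝ)] with X hX
          rw [div_term_nolog hX]
      have := tendsto_finset_sum Finset.univ (fun j _ => hterm j)
      simp only [Finset.sum_ite_eq' Finset.univ i, Finset.mem_univ, if_true] at this
      refine this.congr' ?_
      filter_upwards [eventually_gt_atTop (1:ℝ)] with X hX
      rw [hg, Finset.sum_div]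
    -- limit of g X / X ^ e i is 0
    have hB' : Tendsto (fun X => g X / X ^ (e i)) atTop (nhds 0) := by
      have hbound : Tendsto (fun X : ℝ => |C| * (M₁ * X ^ (-ε')
          + M₂ * X ^ (-(e i)))) atTop (nhds 0) := by
        have h1 := (tendsto_rpow_neg_atTop hε').const_mul M₁
        have h2 := (tendsto_rpow_neg_atTop (by linarith : (0:ℝ) < e i)).const_mul M₂
        simpa using (h1.add h2).const_mul |C|
      refine squeeze_zero_norm' ?_ hbound
      filter_upwards [eventually_gt_atTop (1:ℝ)] with X hX
      have hX0 : (0:ℝ) < X := lt_trans one_pos hX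
      have hd : 0 < X ^ (e i) := Real.rpow_pos_of_pos hX0 _
      have hnum : 0 < M₁ * X ^ ((1:ℝ) + ε') + M₂ :=
        add_pos (mul_pos hM₁ (Real.rpow_pos_of_pos hX0 _)) hM₂
      have hpow : X ^ (e i) ≠ 0 := ne_of_gt hd
      have key : (M₁ * X ^ ((1:ℝ) + ε') + M₂) / X ^ (e i)
          = M₁ * X ^ (-ε') + M₂ * X ^ (-(e i)) := by
        have h1 : X ^ (-ε') = X ^ ((1:ℝ) + ε') / X ^ (e i) := by
          rw [← Real.rpow_sub hX0]; congr 1; simp only [hε'def]; ring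
        have h2 : X ^ (-(e i)) = (X ^ (e i))⁻¹ := Real.rpow_neg hX0.le _
        rw [h1, h2]
        field_simp
      have hle : |g X| ≤ |C| * (M₁ * X ^ ((1:ℝ) + ε') + M₂) :=
        (hC X hX).trans (mul_le_mul_of_nonneg_right (le_abs_self C) hnum.le)
      calc ‖g X / X ^ (e i)‖ = |g X| / X ^ (e i) := by
            rw [Real.norm_eq_abs, abs_div, abs_of_pos hd]
        _ ≤ |C| * (M₁ * X ^ ((1:ℝ) + ε') + M₂) / X ^ (e i) := by gcongr
        _ = |C| * ((M₁ * X ^ ((1:ℝ) + ε') + M₂) / X ^ (e i)) := by ring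
        _ = _ := by rw [key]
    exact tendsto_nhds_unique hA' hB'

/-- Let `e₁ > e₂ > ⋯ > eₙ > 0` and `a₁,…,aₙ, b₁,…,bₙ` be real numbers, and suppose
that for some positive `M₁, M₂` we have, for every `ε > 0`,
`|∑ᵢ (aᵢ X^{eᵢ} log X + bᵢ X^{eᵢ})| ≪_ε M₁ X^{1+ε} + M₂` for all `X > 1`.  Then for
every `ε > 0`, `maxᵢ max(|aᵢ| X^{eᵢ}, |bᵢ| X^{eᵢ}) ≪_ε X^ε (M₁ X + M₂)` for all
`X > 1`. -/
theorem convex_bound_individual_terms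
    (n : ℕ) (hn : 1 ≤ n) (e a b : Fin n → ℝ)
    (hanti : StrictAnti e) (hpos : ∀ i, 0 < e i)
    (M₁ M₂ : ℝ) (hM₁ : 0 < M₁) (hM₂ : 0 < M₂)
    (H : ∀ ε : ℝ, 0 < ε → ∃ C : ℝ, ∀ X : ℝ, 1 < X →
      |∑ i, (a i * X ^ (e i) * Real.log X + b i * X ^ (e i))| ≤
        C * (M₁ * X ^ ((1 : ℝ) + ε) + M₂)) :
    ∀ ε : ℝ, 0 < ε → ∃ C : ℝ, ∀ X : ℝ, 1 < X → ∀ i : Fin n,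
      max (|a i| * X ^ (e i)) (|b i| * X ^ (e i)) ≤ C * X ^ ε * (M₁ * X + M₂) := by
  intro ε hε
  have hz : ∀ i : Fin n, 1 < e i → a i = 0 ∧ b i = 0 :=
    zero_coeff n e a b hanti M₁ M₂ hM₁ hM₂ H
  set C : ℝ := (∑ i, (|a i| + |b i|)) / M₁ + 1 with hCdef
  have hsum : (0:ℝ) ≤ ∑ i, (|a i| + |b i|) :=
    Finset.sum_nonneg fun i _ => by positivity
  have hC0 : 0 < C := by positivity
  refine ⟨C, fun X hX i => ?_⟩
  have hX0 : (0:ℝ) < X := lt_trans one_pos hX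
  have hX1 : (1:ℝ) ≤ X := hX.le
  have hXε : (1:ℝ) ≤ X ^ ε := Real.one_le_rpow hX1 hε.le
  have hR : 0 < M₁ * X + M₂ := by nlinarith
  by_cases hei : e i ≤ 1
  · have hpow : X ^ (e i) ≤ X := by
      calc X ^ (e i) ≤ X ^ (1:ℝ) := Real.rpow_le_rpow_of_exponent_le hX1 hei
        _ = X := Real.rpow_one X
    have hsingle : |a i| + |b i| ≤ ∑ j, (|a j| + |b j|) :=
      Finset.single_le_sum (f := fun j => |a j| + |b j|) (fun j _ => by positivity) (Finset.mem_univ i)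
    have hCM : ∑ j, (|a j| + |b j|) ≤ C * M₁ := by
      rw [hCdef]; field_simp; nlinarith
    have hbnd : ∀ t : ℝ, 0 ≤ t → t ≤ |a i| + |b i| →
        t * X ^ (e i) ≤ C * X ^ ε * (M₁ * X + M₂) := by
      intro t ht htle
      have h1 : t * X ^ (e i) ≤ (C * M₁) * X := by
        apply mul_le_mul (by linarith) hpow (Real.rpow_nonneg hX0.le _) (by positivity)
      have h2 : (C * M₁) * X ≤ C * (M₁ * X + M₂) := by nlinarith
      calc t * X ^ (e i) ≤ C * (M₁ * X + M₂) := h1.trans h2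
        _ = C * 1 * (M₁ * X + M₂) := by ring
        _ ≤ C * X ^ ε * (M₁ * X + M₂) := by
            apply mul_le_mul_of_nonneg_right ?_ hR.le
            exact mul_le_mul_of_nonneg_left hXε hC0.le
    exact max_le (hbnd _ (abs_nonneg _) (by linarith [abs_nonneg (b i)]))
      (hbnd _ (abs_nonneg _) (by linarith [abs_nonneg (a i)]))
  · push_neg at hei
    obtain ⟨ha0, hb0⟩ := hz i hei
    have : (0:ℝ) ≤ C * X ^ ε * (M₁ * X + M₂) := by positivity
    simp [ha0, hb0, this]
end
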